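/- arXiv:1912.01806 — 4 statements merged into one kernel-verified Lean document; each statement's English description precedes it below -/
import Mathlib

section
/- Let (Ω, F, P) be a probability space, let ψ : [1,∞) → ℝ be a continuous, strictly increasing, positive function with ψ(1) = 1, and let q = (q(m))_{m ≥ 1} be a strictly increasing sequence of real numbers with q(1) = 1 and q(m) → ∞. Suppose W[q,ψ] := sup_{m ≥ 1} ψ(q(m+1)) / ψ(q(m)) is finite. Then the classical Grand Lebesgue norm and the discrete Grand Lebesgue norm are equivalent: for every measurable f on Ω, ‖f‖_{G^q ψ} ≤ ‖f‖_{Gψ} ≤ W[q,ψ] · ‖f‖_{G^q ψ}. -/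
open MeasureTheory ENNReal Set

/-- The (classical) Grand Lebesgue norm `‖f‖_{Gψ} = sup_{p ≥ 1} |f|_p / ψ(p)`,
with values in `ℝ≥0∞`. -/
noncomputable def grandLebesgueNorm {Ω : Type*} [MeasurableSpace Ω] (P : Measure Ω)
    (ψ : ℝ → ℝ) (f : Ω → ℝ) : ℝ≥0∞ :=
  ⨆ p : {p : ℝ // 1 ≤ p}, eLpNorm f (ENNReal.ofReal p.1) P / ENNReal.ofReal (ψ p.1)

/-- The discrete Grand Lebesgue norm `‖f‖_{G^q ψ} = sup_{m ≥ 1} |f|_{q(m)} / ψ(q(m))`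
associated to a sequence `q`. -/
noncomputable def discreteGrandLebesgueNorm {Ω : Type*} [MeasurableSpace Ω] (P : Measure Ω)
    (ψ : ℝ → ℝ) (q : ℕ → ℝ) (f : Ω → ℝ) : ℝ≥0∞ :=
  ⨆ m : {m : ℕ // 1 ≤ m}, eLpNorm f (ENNReal.ofReal (q m.1)) P / ENNReal.ofReal (ψ (q m.1))

/-- `W[q,ψ] = sup_{m ≥ 1} ψ(q(m+1)) / ψ(q(m))`, with values in `ℝ≥0∞`. -/
noncomputable def Wconst (ψ : ℝ → ℝ) (q : ℕ → ℝ) : ℝ≥0∞ :=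
  ⨆ m : {m : ℕ // 1 ≤ m}, ENNReal.ofReal (ψ (q (m.1 + 1))) / ENNReal.ofReal (ψ (q m.1))

/-- **Theorem 2.1.** Let `ψ : [1,∞) → ℝ` be continuous, strictly increasing, positive with
`ψ(1) = 1` and let `q(m)`, `m ≥ 1`, be a strictly increasing sequence with `q(1) = 1` and
`q(m) → ∞`. If `W[q,ψ] = sup_m ψ(q(m+1))/ψ(q(m)) < ∞`, then for every measurable `f` on a
probability space `‖f‖_{G^q ψ} ≤ ‖f‖_{Gψ} ≤ W[q,ψ] · ‖f‖_{G^q ψ}`. -/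
theorem discrete_GLS_norm_equivalence
    {Ω : Type*} [MeasurableSpace Ω] (P : Measure Ω) [IsProbabilityMeasure P]
    (ψ : ℝ → ℝ) (hψc : ContinuousOn ψ (Ici 1)) (hψm : StrictMonoOn ψ (Ici 1))
    (hψpos : ∀ p, 1 ≤ p → 0 < ψ p) (hψ1 : ψ 1 = 1)
    (q : ℕ → ℝ) (hq : ∀ m, 1 ≤ m → q m < q (m + 1)) (hq1 : q 1 = 1)
    (hqlim : Filter.Tendsto q Filter.atTop Filter.atTop)
    (hW : Wconst ψ q ≠ ∞)
    (f : Ω → ℝ) (hf : Measurable f) :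
    discreteGrandLebesgueNorm P ψ q f ≤ grandLebesgueNorm P ψ f ∧
      grandLebesgueNorm P ψ f ≤ Wconst ψ q * discreteGrandLebesgueNorm P ψ q f := by
  classical
  have hqge : ∀ m, 1 ≤ m → (1:ℝ) ≤ q m := by
    intro m hm
    induction m with
    | zero => omega
    | succ n ih =>
      rcases Nat.eq_or_lt_of_le hm with h | h
      · rw [← h, hq1]
      · have hn : 1 ≤ n := by omega
        exact le_trans (ih hn) (hq n hn).le
  constructor
  · apply iSup_le
    rintro ⟨m, hm⟩
    exact le_iSup_of_le (⟨q m, hqge m hm⟩ : {p : ℝ // 1 ≤ p}) le_rfl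
  · apply iSup_le
    rintro ⟨p, hp⟩
    obtain ⟨N, hN⟩ := Filter.eventually_atTop.mp (hqlim.eventually_gt_atTop p)
    set N' := max N 1 with hN'
    set Q : ℕ → Prop := fun m => 1 ≤ m ∧ q m ≤ p with hQdef
    have hQ1 : Q 1 := ⟨le_rfl, by rw [hq1]; exact hp⟩
    set k := Nat.findGreatest Q N' with hk
    have hQk : Q k := Nat.findGreatest_spec (le_max_right N 1) hQ1
    have hk1 : 1 ≤ k := hQk.1
    have hqk : q k ≤ p := hQk.2
    have hpk1 : p < q (k + 1) := by
      by_cases h : k + 1 ≤ N'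
      · by_contra hle
        push_neg at hle
        exact Nat.findGreatest_is_greatest (P := Q) (k := k + 1) (by omega) h ⟨by omega, hle⟩
      · have h1 : N' < k + 1 := not_le.mp h
        exact hN (k + 1) (le_trans (le_max_left N 1) h1.le)
    have hk1le : (1:ℝ) ≤ q k := hqge k hk1
    have hk2le : (1:ℝ) ≤ q (k + 1) := hqge (k + 1) (by omega)
    have hψqk : 0 < ψ (q k) := hψpos _ hk1le
    have hψqk1 : 0 < ψ (q (k + 1)) := hψpos _ hk2le
    have hψmono : ψ (q k) ≤ ψ p :=
      hψm.monotoneOn (mem_Ici.mpr hk1le) (mem_Ici.mpr hp) hqk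
    have hLp : eLpNorm f (ENNReal.ofReal p) P ≤ eLpNorm f (ENNReal.ofReal (q (k + 1))) P :=
      eLpNorm_le_eLpNorm_of_exponent_le (ENNReal.ofReal_le_ofReal hpk1.le)
        hf.aestronglyMeasurable
    have hy0 : ENNReal.ofReal (ψ (q (k + 1))) ≠ 0 := (ENNReal.ofReal_pos.mpr hψqk1).ne'
    have hyt : ENNReal.ofReal (ψ (q (k + 1))) ≠ ∞ := ENNReal.ofReal_ne_top
    calc eLpNorm f (ENNReal.ofReal p) P / ENNReal.ofReal (ψ p)
        ≤ eLpNorm f (ENNReal.ofReal (q (k + 1))) P / ENNReal.ofReal (ψ (q k)) :=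
          ENNReal.div_le_div hLp (ENNReal.ofReal_le_ofReal hψmono)
      _ = (ENNReal.ofReal (ψ (q (k + 1))) / ENNReal.ofReal (ψ (q k))) *
          (eLpNorm f (ENNReal.ofReal (q (k + 1))) P / ENNReal.ofReal (ψ (q (k + 1)))) := by
          rw [mul_comm, ← mul_div_assoc, ENNReal.div_mul_cancel hy0 hyt]
      _ ≤ Wconst ψ q * discreteGrandLebesgueNorm P ψ q f :=
          mul_le_mul' (le_iSup_of_le (⟨k, hk1⟩ : {m : ℕ // 1 ≤ m}) le_rfl)
            (le_iSup_of_le (⟨k + 1, by omega⟩ : {m : ℕ // 1 ≤ m}) le_rfl)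
end

section
/- Let (Ω, F, P) be a probability space, let ψ : [1,∞) → ℝ be a continuous positive function with ψ(1) = 1 (not assumed monotone), and let q = (q(m))_{m ≥ 1} be a strictly increasing sequence with q(1) = 1 and q(m) → ∞, with partition intervals A(m) := [q(m), q(m+1)). Suppose Ŵ[q,ψ] := sup_{m ≥ 1} ψ(q(m+1)) / inf_{p ∈ A(m)} ψ(p) is finite. Then for every measurable f on Ω one has ‖f‖_{G^q ψ} ≤ ‖f‖_{Gψ} ≤ Ŵ[q,ψ] · ‖f‖_{G^q ψ} (whenever the right-hand quantities are finite). -/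
open MeasureTheory ENNReal Set

/-- `Ŵ[q,ψ] = sup_{m ≥ 1} ψ(q(m+1)) / inf_{p ∈ A(m)} ψ(p)`, where `A(m) = [q(m), q(m+1))`,
with values in `ℝ≥0∞`. -/
noncomputable def Whatconst (ψ : ℝ → ℝ) (q : ℕ → ℝ) : ℝ≥0∞ :=
  ⨆ m : {m : ℕ // 1 ≤ m},
    ENNReal.ofReal (ψ (q (m.1 + 1))) / ENNReal.ofReal (sInf (ψ '' Ico (q m.1) (q (m.1 + 1))))

/-- **Remark 2.1.** The norm equivalence of Theorem 2.1 holds without monotonicity of the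
generating function `ψ`: if `ψ : [1,∞) → ℝ` is continuous and positive with `ψ(1) = 1`,
`q(m)`, `m ≥ 1`, is a strictly increasing sequence with `q(1) = 1` and `q(m) → ∞`, and
`Ŵ[q,ψ] = sup_m ψ(q(m+1)) / inf_{p ∈ [q(m), q(m+1))} ψ(p)` is finite, then for every
measurable `f` on a probability space (with finite discrete norm)
`‖f‖_{G^q ψ} ≤ ‖f‖_{Gψ} ≤ Ŵ[q,ψ] · ‖f‖_{G^q ψ}`. -/
theorem discrete_GLS_norm_equivalence_nonmonotone
    {Ω : Type*} [MeasurableSpace Ω] (P : Measure Ω) [IsProbabilityMeasure P]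
    (ψ : ℝ → ℝ) (hψc : ContinuousOn ψ (Ici 1))
    (hψpos : ∀ p, 1 ≤ p → 0 < ψ p) (hψ1 : ψ 1 = 1)
    (q : ℕ → ℝ) (hq : ∀ m, 1 ≤ m → q m < q (m + 1)) (hq1 : q 1 = 1)
    (hqlim : Filter.Tendsto q Filter.atTop Filter.atTop)
    (hW : Whatconst ψ q ≠ ∞)
    (f : Ω → ℝ) (hf : Measurable f)
    (hfin : discreteGrandLebesgueNorm P ψ q f ≠ ∞) :
    discreteGrandLebesgueNorm P ψ q f ≤ grandLebesgueNorm P ψ f ∧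
      grandLebesgueNorm P ψ f ≤ Whatconst ψ q * discreteGrandLebesgueNorm P ψ q f := by
  have hq1le : ∀ m : ℕ, 1 ≤ m → 1 ≤ q m := by
    intro m hm
    induction m with
    | zero => omega
    | succ n ih =>
      rcases Nat.lt_or_ge 1 (n+1) with h | h
      · have hn : 1 ≤ n := by omega
        exact le_of_lt (lt_of_le_of_lt (ih hn) (hq n hn))
      · have : n + 1 = 1 := by omega
        rw [this, hq1]
  constructor
  · -- discrete ≤ continuous
    apply iSup_le
    rintro ⟨m, hm⟩
    exact le_iSup_of_le (⟨q m, hq1le m hm⟩ : {p : ℝ // 1 ≤ p}) le_rfl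
  · -- continuous ≤ W * discrete
    apply iSup_le
    rintro ⟨p, hp⟩
    -- find m ≥ 1 with q m ≤ p < q (m+1)
    have hex : ∃ n, 2 ≤ n ∧ p < q n := by
      obtain ⟨n, hn⟩ := ((hqlim.eventually_gt_atTop p).and (Filter.eventually_ge_atTop 2)).exists
      exact ⟨n, hn.2, hn.1⟩
    classical
    set n₀ := Nat.find hex with hn₀def
    obtain ⟨hn₀2, hn₀p⟩ := Nat.find_spec hex
    set m := n₀ - 1 with hmdef
    have hm1 : 1 ≤ m := by omega
    have hmn : m + 1 = n₀ := by omega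
    have hqm_le : q m ≤ p := by
      rcases Nat.lt_or_ge 1 m with h | h
      · have := Nat.find_min hex (m := m) (by omega)
        push_neg at this
        exact this (by omega)
      · have : m = 1 := by omega
        rw [this, hq1]; exact hp
    have hplt : p < q (m + 1) := by rw [hmn]; exact hn₀p
    have hpIco : p ∈ Ico (q m) (q (m + 1)) := ⟨hqm_le, hplt⟩
    -- positivity of the infimum
    have hqm1 : 1 ≤ q m := hq1le m hm1
    have hsub : Icc (q m) (q (m+1)) ⊆ Ici 1 := fun x hx => le_trans hqm1 hx.1
    have hcomp : IsCompact (Icc (q m) (q (m+1))) := isCompact_Icc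
    have hne : (Icc (q m) (q (m+1))).Nonempty := ⟨q m, le_refl _, le_of_lt (hq m hm1)⟩
    obtain ⟨x₀, hx₀mem, hx₀min⟩ := hcomp.exists_isMinOn hne (hψc.mono hsub)
    have hc : 0 < ψ x₀ := hψpos x₀ (hsub hx₀mem)
    have hbdd : ∀ y ∈ ψ '' Ico (q m) (q (m+1)), ψ x₀ ≤ y := by
      rintro y ⟨x, hx, rfl⟩
      exact hx₀min (Ico_subset_Icc_self hx)
    have hIcone : (ψ '' Ico (q m) (q (m+1))).Nonempty := ⟨ψ p, p, hpIco, rfl⟩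
    set s := sInf (ψ '' Ico (q m) (q (m+1))) with hsdef
    have hspos : 0 < s := lt_of_lt_of_le hc (le_csInf hIcone hbdd)
    have hsle : s ≤ ψ p := csInf_le ⟨ψ x₀, hbdd⟩ ⟨p, hpIco, rfl⟩
    have hψq' : 0 < ψ (q (m+1)) := hψpos _ (hq1le (m+1) (by omega))
    -- main chain
    have hmono : eLpNorm f (ENNReal.ofReal p) P ≤ eLpNorm f (ENNReal.ofReal (q (m+1))) P :=
      eLpNorm_le_eLpNorm_of_exponent_le (ENNReal.ofReal_le_ofReal hplt.le)
        hf.aestronglyMeasurable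
    have step1 : eLpNorm f (ENNReal.ofReal p) P / ENNReal.ofReal (ψ p)
        ≤ eLpNorm f (ENNReal.ofReal (q (m+1))) P / ENNReal.ofReal s :=
      ENNReal.div_le_div hmono (ENNReal.ofReal_le_ofReal hsle)
    have hfact : eLpNorm f (ENNReal.ofReal (q (m+1))) P / ENNReal.ofReal s
        = (ENNReal.ofReal (ψ (q (m+1))) / ENNReal.ofReal s)
          * (eLpNorm f (ENNReal.ofReal (q (m+1))) P / ENNReal.ofReal (ψ (q (m+1)))) := by
      have hx0 : ENNReal.ofReal (ψ (q (m+1))) ≠ 0 := by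
        exact (ENNReal.ofReal_pos.mpr hψq').ne'
      calc eLpNorm f (ENNReal.ofReal (q (m+1))) P / ENNReal.ofReal s
          = (ENNReal.ofReal (ψ (q (m+1))) * (ENNReal.ofReal (ψ (q (m+1))))⁻¹)
            * (eLpNorm f (ENNReal.ofReal (q (m+1))) P / ENNReal.ofReal s) := by
            rw [ENNReal.mul_inv_cancel hx0 ENNReal.ofReal_ne_top, one_mul]
        _ = _ := by
            simp only [div_eq_mul_inv]; ring
    refine step1.trans (hfact.le.trans (mul_le_mul' ?_ ?_))
    · exact le_iSup_of_le (⟨m, hm1⟩ : {m : ℕ // 1 ≤ m}) le_rfl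
    · exact le_iSup_of_le (⟨m+1, by omega⟩ : {m : ℕ // 1 ≤ m}) le_rfl
end

section
/- Let (Ω, F, P) be a probability space, ψ : [1,∞) → ℝ continuous, strictly increasing, positive with ψ(1) = 1, and q = (q(m))_{m ≥ 1} a strictly increasing sequence with q(1) = 1 and q(m) → ∞. Define h(x) := sup_{m ≥ 1} [ q(m) ln x − q(m) ln ψ(q(m)) ] for x ≥ e. If ξ is a random variable with 0 < ‖ξ‖_{G^q ψ} < ∞, then for every x ≥ e · ‖ξ‖_{G^q ψ} one has the tail estimate P(|ξ| ≥ x) ≤ exp( − h( x / ‖ξ‖_{G^q ψ} ) ). -/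
open MeasureTheory ENNReal Set

namespace MeasureTheory

variable {Ω : Type*} [MeasurableSpace Ω] {μ : Measure Ω}

theorem meas_ge_abs_le_ofReal_div_rpow_of_eLpNorm_le {f : Ω → ℝ}
    (hf : AEStronglyMeasurable f μ) {p C x : ℝ} (hp : 0 < p) (hC : 0 ≤ C) (hx : 0 < x)
    (hfC : eLpNorm f (ENNReal.ofReal p) μ ≤ ENNReal.ofReal C) :
    μ {ω | x ≤ |f ω|} ≤ ENNReal.ofReal ((C / x) ^ p) := by
  have hset : {ω | x ≤ |f ω|} = {ω | ENNReal.ofReal x ≤ ‖f ω‖ₑ} := by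
    ext ω
    simp only [mem_ofPred_eq, Real.enorm_eq_ofReal_abs, ENNReal.ofReal_le_ofReal_iff (abs_nonneg _)]
  have hmarkov := meas_ge_le_mul_pow_eLpNorm_enorm μ (ENNReal.ofReal_pos.2 hp).ne'
    ENNReal.ofReal_ne_top hf (ENNReal.ofReal_pos.2 hx).ne' (absurd · ENNReal.ofReal_ne_top)
  rw [ENNReal.toReal_ofReal hp.le] at hmarkov
  rw [hset]
  calc _ ≤ _ := hmarkov
    _ ≤ (ENNReal.ofReal x)⁻¹ ^ p * ENNReal.ofReal C ^ p := by gcongr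
    _ = ENNReal.ofReal ((C / x) ^ p) := by
      rw [← ENNReal.mul_rpow_of_nonneg _ _ hp.le, ← ENNReal.div_eq_inv_mul,
        ← ENNReal.ofReal_div_of_pos hx, ENNReal.ofReal_rpow_of_nonneg (by positivity) hp.le]

end MeasureTheory

theorem eLpNorm_le_discreteGrandLebesgueNorm_mul {Ω : Type*} [MeasurableSpace Ω]
    (P : Measure Ω) (ψ : ℝ → ℝ) (q : ℕ → ℝ) (f : Ω → ℝ) {m : ℕ} (hm : 1 ≤ m)
    (hψ : 0 < ψ (q m)) :
    eLpNorm f (ENNReal.ofReal (q m)) P ≤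
      discreteGrandLebesgueNorm P ψ q f * ENNReal.ofReal (ψ (q m)) :=
  (ENNReal.div_le_iff (ENNReal.ofReal_pos.2 hψ).ne' ENNReal.ofReal_ne_top).1 <|
    le_iSup (fun k : {k : ℕ // 1 ≤ k} =>
      eLpNorm f (ENNReal.ofReal (q k.1)) P / ENNReal.ofReal (ψ (q k.1))) ⟨m, hm⟩

theorem Real.div_rpow_eq_exp_neg {c y : ℝ} (hc : 0 < c) (hy : 0 < y) (p : ℝ) :
    (c / y) ^ p = Real.exp (-(p * Real.log y - p * Real.log c)) := by
  rw [Real.rpow_def_of_pos (div_pos hc hy), Real.log_div hc.ne' hy.ne']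
  ring_nf

/-- For each `m`, Markov's inequality in `L^{q(m)}` together with `‖ξ‖_{q(m)} ≤ N ψ(q(m))`
gives `P(|ξ| ≥ x) ≤ (N ψ(q(m)) / x)^{q(m)} = exp(-[q(m) ln(x/N) − q(m) ln ψ(q(m))])`.
The bound `exp(-h(x/N))` of the paper is stated as the infimum over `m` of these terms, which is
the same since `t ↦ exp(-t)` is a continuous decreasing bijection onto `(0, ∞)`
(sending `h = +∞` to `0`). -/
theorem discrete_GLS_tail_estimate_general
    {Ω : Type*} [MeasurableSpace Ω] (P : Measure Ω)
    (ψ : ℝ → ℝ) (hψpos : ∀ p, 1 ≤ p → 0 < ψ p)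
    (q : ℕ → ℝ) (hq : ∀ m, 1 ≤ m → q m < q (m + 1)) (hq1 : q 1 = 1)
    (ξ : Ω → ℝ) (hξ : Measurable ξ)
    (hpos : 0 < discreteGrandLebesgueNorm P ψ q ξ)
    (hfin : discreteGrandLebesgueNorm P ψ q ξ ≠ ∞)
    (x : ℝ) (hx : Real.exp 1 * (discreteGrandLebesgueNorm P ψ q ξ).toReal ≤ x) :
    P {ω | x ≤ |ξ ω|} ≤
      ⨅ m : {m : ℕ // 1 ≤ m},
        ENNReal.ofReal
          (Real.exp (-(q m.1 * Real.log (x / (discreteGrandLebesgueNorm P ψ q ξ).toReal)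
            - q m.1 * Real.log (ψ (q m.1))))) := by
  set N := (discreteGrandLebesgueNorm P ψ q ξ).toReal
  have hN : 0 < N := ENNReal.toReal_pos hpos.ne' hfin
  have hx₀ : 0 < x := lt_of_lt_of_le (by positivity) hx
  refine le_iInf fun ⟨m, hm⟩ => ?_
  have hqm : 1 ≤ q m :=
    hq1 ▸ monotoneOn_nat_Ici_of_le_succ (fun n hn => (hq n hn).le) (Nat.le_refl 1) hm hm
  have hψqm : 0 < ψ (q m) := hψpos _ hqm
  have hLp : eLpNorm ξ (ENNReal.ofReal (q m)) P ≤ ENNReal.ofReal (ψ (q m) * N) := by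
    rw [mul_comm, ENNReal.ofReal_mul hN.le, ENNReal.ofReal_toReal hfin]
    exact eLpNorm_le_discreteGrandLebesgueNorm_mul P ψ q ξ hm hψqm
  calc P {ω | x ≤ |ξ ω|} ≤ ENNReal.ofReal ((ψ (q m) * N / x) ^ q m) :=
        meas_ge_abs_le_ofReal_div_rpow_of_eLpNorm_le hξ.aestronglyMeasurable (by linarith)
          (by positivity) hx₀ hLp
    _ = _ := by
      rw [← div_div_eq_mul_div, Real.div_rpow_eq_exp_neg hψqm (div_pos hx₀ hN)]

/-- **Tail estimate (1.7).** Let `ψ : [1,∞) → ℝ` be continuous, strictly increasing, positive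
with `ψ(1) = 1`, and let `q(m)`, `m ≥ 1`, be a strictly increasing sequence with `q(1) = 1`,
`q(m) → ∞`. Set `h(x) := sup_{m ≥ 1} [q(m) ln x − q(m) ln ψ(q(m))]`. If
`0 < N := ‖ξ‖_{G^q ψ} < ∞`, then for every `x ≥ e·N` one has
`P(|ξ| ≥ x) ≤ exp(−h(x/N))`. Here `exp(−h(x/N))`, with `h` the supremum over `m ≥ 1`, is
written equivalently as the infimum over `m ≥ 1` of
`exp(−[q(m) ln(x/N) − q(m) ln ψ(q(m))])`, since `t ↦ exp(−t)` is a continuous antitone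
bijection (sending `+∞` to `0`). -/
theorem discrete_GLS_tail_estimate
    {Ω : Type*} [MeasurableSpace Ω] (P : Measure Ω) [IsProbabilityMeasure P]
    (ψ : ℝ → ℝ) (hψc : ContinuousOn ψ (Ici 1)) (hψm : StrictMonoOn ψ (Ici 1))
    (hψpos : ∀ p, 1 ≤ p → 0 < ψ p) (hψ1 : ψ 1 = 1)
    (q : ℕ → ℝ) (hq : ∀ m, 1 ≤ m → q m < q (m + 1)) (hq1 : q 1 = 1)
    (hqlim : Filter.Tendsto q Filter.atTop Filter.atTop)
    (ξ : Ω → ℝ) (hξ : Measurable ξ)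
    (hpos : 0 < discreteGrandLebesgueNorm P ψ q ξ)
    (hfin : discreteGrandLebesgueNorm P ψ q ξ ≠ ∞)
    (x : ℝ) (hx : Real.exp 1 * (discreteGrandLebesgueNorm P ψ q ξ).toReal ≤ x) :
    P {ω | x ≤ |ξ ω|} ≤
      ⨅ m : {m : ℕ // 1 ≤ m},
        ENNReal.ofReal
          (Real.exp (-(q m.1 * Real.log (x / (discreteGrandLebesgueNorm P ψ q ξ).toReal)
            - q m.1 * Real.log (ψ (q m.1))))) :=
  discrete_GLS_tail_estimate_general P ψ hψpos q hq hq1 ξ hξ hpos hfin x hx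
end

section
/- Let (Ω, F, P) be a probability space and ψ : [1,∞) → ℝ a continuous, strictly increasing, positive function with ψ(1) = 1 satisfying sup_{m ≥ 1} ψ(m+1)/ψ(m) < ∞, where m ranges over positive integers. Then the Grand Lebesgue norm taken over all real p ≥ 1 is equivalent to the norm taken only over integer exponents: for every measurable f on Ω, sup_{m ∈ ℕ, m ≥ 1} |f|_m / ψ(m) ≤ sup_{p ≥ 1} |f|_p / ψ(p) ≤ (sup_{m ≥ 1} ψ(m+1)/ψ(m)) · sup_{m ∈ ℕ, m ≥ 1} |f|_m / ψ(m). -/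
open MeasureTheory ENNReal Set

/-- The special case `q₀ = (1,2,3,…)` of the discrete Grand Lebesgue norm equivalence:
if `ψ : [1,∞) → ℝ` is continuous, strictly increasing, positive with `ψ(1) = 1` and
`sup_{m ≥ 1} ψ(m+1)/ψ(m) < ∞` (over positive integers `m`), then for every measurable `f` on
a probability space the Grand Lebesgue norm over all real `p ≥ 1` is equivalent to the one
over integer exponents:
`sup_{m ≥ 1} |f|_m/ψ(m) ≤ sup_{p ≥ 1} |f|_p/ψ(p) ≤ (sup_{m ≥ 1} ψ(m+1)/ψ(m)) · sup_{m ≥ 1} |f|_m/ψ(m)`. -/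
theorem integer_GLS_norm_equivalence
    {Ω : Type*} [MeasurableSpace Ω] (P : Measure Ω) [IsProbabilityMeasure P]
    (ψ : ℝ → ℝ) (hψc : ContinuousOn ψ (Ici 1)) (hψm : StrictMonoOn ψ (Ici 1))
    (hψpos : ∀ p, 1 ≤ p → 0 < ψ p) (hψ1 : ψ 1 = 1)
    (hW : (⨆ m : {m : ℕ // 1 ≤ m},
        ENNReal.ofReal (ψ ((m.1 : ℝ) + 1)) / ENNReal.ofReal (ψ (m.1 : ℝ))) ≠ ∞)
    (f : Ω → ℝ) (hf : Measurable f) :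
    (⨆ m : {m : ℕ // 1 ≤ m},
        eLpNorm f (ENNReal.ofReal (m.1 : ℝ)) P / ENNReal.ofReal (ψ (m.1 : ℝ))) ≤
      (⨆ p : {p : ℝ // 1 ≤ p}, eLpNorm f (ENNReal.ofReal p.1) P / ENNReal.ofReal (ψ p.1)) ∧
    (⨆ p : {p : ℝ // 1 ≤ p}, eLpNorm f (ENNReal.ofReal p.1) P / ENNReal.ofReal (ψ p.1)) ≤
      (⨆ m : {m : ℕ // 1 ≤ m},
        ENNReal.ofReal (ψ ((m.1 : ℝ) + 1)) / ENNReal.ofReal (ψ (m.1 : ℝ))) *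
      (⨆ m : {m : ℕ // 1 ≤ m},
        eLpNorm f (ENNReal.ofReal (m.1 : ℝ)) P / ENNReal.ofReal (ψ (m.1 : ℝ))) := by
  constructor
  · exact iSup_le fun m => le_iSup_of_le ⟨(m.1 : ℝ), by exact_mod_cast m.2⟩ le_rfl
  · apply iSup_le
    rintro ⟨p, hp⟩
    set m : ℕ := ⌊p⌋₊ with hm
    have hm1 : 1 ≤ m := (Nat.one_le_floor_iff p).mpr hp
    have hmp : (m : ℝ) ≤ p := Nat.floor_le (by linarith)
    have hpm1 : p ≤ (m : ℝ) + 1 := (Nat.lt_floor_add_one p).le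
    have h1m : (1 : ℝ) ≤ (m : ℝ) := by exact_mod_cast hm1
    -- abbreviations
    set a : ℝ≥0∞ := eLpNorm f (ENNReal.ofReal ((m : ℝ) + 1)) P with ha
    set b : ℝ≥0∞ := ENNReal.ofReal (ψ ((m : ℝ) + 1)) with hb
    set c : ℝ≥0∞ := ENNReal.ofReal (ψ (m : ℝ)) with hc
    have hb0 : b ≠ 0 := by
      simp only [hb, ne_eq, ENNReal.ofReal_eq_zero, not_le]
      exact hψpos _ (by linarith)
    have hbt : b ≠ ∞ := ENNReal.ofReal_ne_top
    -- step 1: |f|_p / ψ p ≤ a / c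
    have step1 : eLpNorm f (ENNReal.ofReal p) P / ENNReal.ofReal (ψ p) ≤ a / c := by
      apply ENNReal.div_le_div
      · exact eLpNorm_le_eLpNorm_of_exponent_le
          (ENNReal.ofReal_le_ofReal hpm1) hf.aestronglyMeasurable
      · exact ENNReal.ofReal_le_ofReal (hψm.monotoneOn h1m hp hmp)
    -- step 2: a / c = (b / c) * (a / b)
    have step2 : a / c = (b / c) * (a / b) := by
      simp only [div_eq_mul_inv]
      rw [show b * c⁻¹ * (a * b⁻¹) = (b * b⁻¹) * (a * c⁻¹) by ring,
        ENNReal.mul_inv_cancel hb0 hbt, one_mul]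
    refine step1.trans (step2.le.trans (mul_le_mul' ?_ ?_))
    · refine le_iSup_of_le ⟨m, hm1⟩ ?_
      exact le_rfl
    · refine le_iSup_of_le ⟨m + 1, by omega⟩ ?_
      simp only [ha, hb]
      push_cast
      exact le_rfl
end
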